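/- Let n ≥ 1 and μ : (Fin n × Fin n × Fin n) →₀ ℕ. The monomial X^μ is torus-invariant if and only if each of the three marginal degree functions is constant: the function i ↦ ∑_{j,k} μ(i,j,k) is constant on Fin n, the function j ↦ ∑_{i,k} μ(i,j,k) is constant on Fin n, and the function k ↦ ∑_{i,j} μ(i,j,k) is constant on Fin n. -/

import Mathlib

/-!
Under `S_{a,b,c}` the monomial `X^μ` is multiplied by the character
`∏ᵢ aᵢ^{rᵢ} · ∏ⱼ bⱼ^{sⱼ} · ∏ₖ cₖ^{tₖ}`, where `r`, `s`, `t` are the three marginals of `μ`.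
If a marginal is constant, equal to `d`, its factor is `(∏ᵢ aᵢ)^d = 1`. Conversely, taking
`a = (…, 2, …, 2⁻¹, …)` (entries `i` and `i'`, all others `1`) and `b = c = 1` gives
`2^{rᵢ - r_{i'}} = 1`, and `2` has infinite order in `ℂˣ`.
-/

open MvPolynomial

/-- The scaling substitution `S_{a,b,c}`: the `ℂ`-algebra endomorphism of
`MvPolynomial (Fin n × Fin n × Fin n) ℂ` determined by
`X (i,j,k) ↦ (a i * b j * c k) • X (i,j,k)`. -/
noncomputable def scaleSub {n : ℕ} (a b c : Fin n → ℂˣ) :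
    MvPolynomial (Fin n × Fin n × Fin n) ℂ →ₐ[ℂ] MvPolynomial (Fin n × Fin n × Fin n) ℂ :=
  aeval fun v : Fin n × Fin n × Fin n =>
    (((a v.1 : ℂ) * (b v.2.1 : ℂ) * (c v.2.2 : ℂ))) • X v

/-- A polynomial is torus-invariant if it is fixed by all scaling substitutions `S_{a,b,c}`
with `∏ a = ∏ b = ∏ c = 1`; this encodes the natural action of
`ST_n(ℂ) × ST_n(ℂ) × ST_n(ℂ)` on `ℂ^n ⊗ ℂ^n ⊗ ℂ^n`. -/
def TorusInvariant {n : ℕ} (p : MvPolynomial (Fin n × Fin n × Fin n) ℂ) : Prop :=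
  ∀ a b c : Fin n → ℂˣ,
    (∏ i, a i) = 1 → (∏ j, b j) = 1 → (∏ k, c k) = 1 → scaleSub a b c p = p

section ConstantExponents

variable {ι M G : Type*} [Fintype ι]

theorem prod_pow_eq_one_of_forall_eq [CommMonoid M] {m : ι → ℕ} (hm : ∀ i j, m i = m j)
    {a : ι → M} (ha : ∏ i, a i = 1) : ∏ i, a i ^ m i = 1 := by
  rcases isEmpty_or_nonempty ι with _ | ⟨⟨i₀⟩⟩
  · simp
  · rw [Finset.prod_congr rfl fun i _ => by rw [hm i i₀], Finset.prod_pow, ha, one_pow]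

theorem prod_mulSingle_pow [CommMonoid M] [DecidableEq ι] (i : ι) (x : M) (m : ι → ℕ) :
    ∏ k, Pi.mulSingle i x k ^ m k = x ^ m i := by
  rw [Fintype.prod_eq_single i fun k hk => by rw [Pi.mulSingle_eq_of_ne hk, one_pow],
    Pi.mulSingle_eq_same]

theorem eq_of_forall_prod_pow_eq_one [CommGroup G] {g : G} (hg : ¬IsOfFinOrder g)
    {m : ι → ℕ} (h : ∀ a : ι → G, ∏ i, a i = 1 → ∏ i, a i ^ m i = 1) (i j : ι) :
    m i = m j := by
  classical
  have hij := h (Pi.mulSingle i g * Pi.mulSingle j g⁻¹) (by simp [Finset.prod_mul_distrib])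
  simp only [Pi.mul_apply, mul_pow, Finset.prod_mul_distrib, prod_mulSingle_pow, inv_pow,
    mul_inv_eq_one] at hij
  exact injective_pow_iff_not_isOfFinOrder.2 hg hij

theorem forall_prod_pow_eq_one_iff [CommGroup G] {g : G} (hg : ¬IsOfFinOrder g)
    {m : ι → ℕ} :
    (∀ a : ι → G, ∏ i, a i = 1 → ∏ i, a i ^ m i = 1) ↔ ∀ i j, m i = m j :=
  ⟨eq_of_forall_prod_pow_eq_one hg, fun hm _ => prod_pow_eq_one_of_forall_eq hm⟩

end ConstantExponents

theorem not_isOfFinOrder_mk0_two : ¬IsOfFinOrder (Units.mk0 (2 : ℂ) two_ne_zero) := by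
  rw [isOfFinOrder_iff_pow_eq_one]
  rintro ⟨k, hk, h⟩
  have h' : ((2 ^ k : ℕ) : ℂ) = 1 := by simpa [Units.ext_iff] using h
  norm_cast at h'
  simp_all

theorem prod_mul_mul_pow_eq {ι κ ν M : Type*} [Fintype ι] [Fintype κ] [Fintype ν]
    [CommMonoid M] (a : ι → M) (b : κ → M) (c : ν → M) (μ : ι × κ × ν → ℕ) :
    ∏ v, (a v.1 * b v.2.1 * c v.2.2) ^ μ v =
      (∏ i, a i ^ ∑ j, ∑ k, μ (i, j, k)) * (∏ j, b j ^ ∑ i, ∑ k, μ (i, j, k)) *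
        ∏ k, c k ^ ∑ i, ∑ j, μ (i, j, k) := by
  simp only [mul_pow, Finset.prod_mul_distrib, Fintype.prod_prod_type,
    ← Finset.prod_pow_eq_pow_sum]
  congr 2
  · exact Finset.prod_comm
  · simp only [Finset.prod_comm (γ := κ) (α := ν)]
    rw [Finset.prod_comm (γ := ι) (α := ν)]

theorem aeval_smul_X_monomial {σ R : Type*} [Fintype σ] [CommSemiring R] (w : σ → R)
    (μ : σ →₀ ℕ) (r : R) :
    aeval (fun v => w v • X v) (monomial μ r) = monomial μ ((∏ v, w v ^ μ v) * r) := by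
  rw [aeval_monomial, Finsupp.prod_fintype _ _ fun _ => pow_zero _, monomial_eq,
    Finsupp.prod_fintype _ _ fun _ => pow_zero _]
  simp only [smul_eq_C_mul, mul_pow, Finset.prod_mul_distrib, ← map_pow, ← map_prod,
    algebraMap_eq, C_mul]
  ring

theorem scaleSub_monomial_one {n : ℕ} (a b c : Fin n → ℂˣ) (μ : (Fin n × Fin n × Fin n) →₀ ℕ) :
    scaleSub a b c (monomial μ 1) =
      monomial μ (((∏ i, a i ^ ∑ j, ∑ k, μ (i, j, k)) * (∏ j, b j ^ ∑ i, ∑ k, μ (i, j, k)) *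
        ∏ k, c k ^ ∑ i, ∑ j, μ (i, j, k) : ℂˣ) : ℂ) := by
  rw [scaleSub, aeval_smul_X_monomial, mul_one, ← prod_mul_mul_pow_eq]
  push_cast
  rfl

theorem scaleSub_monomial_one_eq_self_iff {n : ℕ} (a b c : Fin n → ℂˣ)
    (μ : (Fin n × Fin n × Fin n) →₀ ℕ) :
    scaleSub a b c (monomial μ 1) = monomial μ 1 ↔
      (∏ i, a i ^ ∑ j, ∑ k, μ (i, j, k)) * (∏ j, b j ^ ∑ i, ∑ k, μ (i, j, k)) *
        ∏ k, c k ^ ∑ i, ∑ j, μ (i, j, k) = 1 := by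
  simp only [scaleSub_monomial_one, monomial_eq_monomial_iff, true_and, one_ne_zero, and_false,
    or_false, Units.val_eq_one]

theorem monomial_invariant_iff_marginals_constant_general (n : ℕ)
    (μ : (Fin n × Fin n × Fin n) →₀ ℕ) :
    TorusInvariant (monomial μ (1 : ℂ)) ↔
      ((∀ i i' : Fin n, (∑ j : Fin n, ∑ k : Fin n, μ (i, j, k))
          = ∑ j : Fin n, ∑ k : Fin n, μ (i', j, k)) ∧
       (∀ j j' : Fin n, (∑ i : Fin n, ∑ k : Fin n, μ (i, j, k))
          = ∑ i : Fin n, ∑ k : Fin n, μ (i, j', k)) ∧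
       (∀ k k' : Fin n, (∑ i : Fin n, ∑ j : Fin n, μ (i, j, k))
          = ∑ i : Fin n, ∑ j : Fin n, μ (i, j, k'))) := by
  simp only [TorusInvariant, scaleSub_monomial_one_eq_self_iff]
  constructor
  · intro h
    refine ⟨(forall_prod_pow_eq_one_iff not_isOfFinOrder_mk0_two).1 fun a ha => ?_,
      (forall_prod_pow_eq_one_iff not_isOfFinOrder_mk0_two).1 fun b hb => ?_,
      (forall_prod_pow_eq_one_iff not_isOfFinOrder_mk0_two).1 fun c hc => ?_⟩
    · simpa using h a 1 1 ha Finset.prod_const_one Finset.prod_const_one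
    · simpa using h 1 b 1 Finset.prod_const_one hb Finset.prod_const_one
    · simpa using h 1 1 c Finset.prod_const_one Finset.prod_const_one hc
  · rintro ⟨hr, hs, ht⟩ a b c ha hb hc
    rw [prod_pow_eq_one_of_forall_eq hr ha, prod_pow_eq_one_of_forall_eq hs hb,
      prod_pow_eq_one_of_forall_eq ht hc, mul_one, mul_one]

/-- A monomial `X^μ` is torus-invariant if and only if all three marginal degree
functions of `μ` are constant. -/
theorem monomial_invariant_iff_marginals_constant (n : ℕ) (hn : 1 ≤ n)
    (μ : (Fin n × Fin n × Fin n) →₀ ℕ) :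
    TorusInvariant (monomial μ (1 : ℂ)) ↔
      ((∀ i i' : Fin n, (∑ j : Fin n, ∑ k : Fin n, μ (i, j, k))
          = ∑ j : Fin n, ∑ k : Fin n, μ (i', j, k)) ∧
       (∀ j j' : Fin n, (∑ i : Fin n, ∑ k : Fin n, μ (i, j, k))
          = ∑ i : Fin n, ∑ k : Fin n, μ (i, j', k)) ∧
       (∀ k k' : Fin n, (∑ i : Fin n, ∑ j : Fin n, μ (i, j, k))
          = ∑ i : Fin n, ∑ j : Fin n, μ (i, j, k'))) :=
  monomial_invariant_iff_marginals_constant_general n μ
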